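/- Let $\alpha$ be a unital partial action of a group $G$ on a commutative unital ring $\mathcal{A}$ and let $w \in Z^n(G,\mathcal{A})$ ($n \geq 1$). Then $w$ is globalizable if and only if there exists a function $\widetilde{w} : G^n \to \mathcal{U}(\mathcal{A})$ such that for all $x_1,\dots,x_{n+1} \in G$: (a) $\alpha_{x_1}(1_{x_1^{-1}} \widetilde{w}(x_2,\dots,x_{n+1})) \prod_{i=1}^n \widetilde{w}(x_1,\dots,x_i x_{i+1},\dots,x_{n+1})^{(-1)^i} \widetilde{w}(x_1,\dots,x_n)^{(-1)^{n+1}} = 1_{x_1}$, and (b) $w(x_1,\dots,x_n) = 1_{(x_1,\dots,x_n)} \widetilde{w}(x_1,\dots,x_n)$. -/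

import Mathlib

variable {G : Type*} [Group G]

/-- Ordered product `x₁ ⋯ x_k` of the first `k` entries of a tuple. -/
def pprodG {n : ℕ} (x : Fin n → G) (k : ℕ) : G := ((List.ofFn x).take k).prod

/-- The tuple obtained from `(x₁,…,x_{n+1})` by multiplying the entries in positions
`i, i+1` (0-indexed). -/
def dface {n : ℕ} (i : Fin n) (x : Fin (n + 1) → G) : Fin n → G :=
  fun j => if (j : ℕ) < (i : ℕ) then x j.castSucc
    else if j = i then x i.castSucc * x i.succ
    else x j.succ

/-- A unital partial action of `G` on a commutative unital ring `A` (a unital partial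
`G`-module): each domain `D g = (e g)·A` is generated by a central idempotent `e g`,
`D 1 = A`, and the partial isomorphisms `α g : D g⁻¹ → D g` (restrictions of the globally
defined maps `act g`) satisfy the partial action axioms. -/
structure UPA (G A : Type*) [Group G] [CommRing A] where
  e : G → A
  idem : ∀ g, e g * e g = e g
  e_one : e 1 = 1
  act : G → A → A
  act_one : ∀ a, act 1 a = a
  act_mem : ∀ g a, e g⁻¹ * a = a → e g * act g a = act g a
  act_add : ∀ g a b, e g⁻¹ * a = a → e g⁻¹ * b = b → act g (a + b) = act g a + act g b
  act_mul : ∀ g a b, e g⁻¹ * a = a → e g⁻¹ * b = b → act g (a * b) = act g a * act g b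
  act_e : ∀ g h, act g (e g⁻¹ * e h) = e g * e (g * h)
  act_inv : ∀ g a, e g⁻¹ * a = a → act g⁻¹ (act g a) = a
  act_comp : ∀ g h a, e h⁻¹ * e (h⁻¹ * g⁻¹) * a = a → act g (act h a) = act (g * h) a

variable {A : Type*} [CommRing A]

/-- The idempotent `1_{(x₁,…,xₙ)} = 1_{x₁} 1_{x₁x₂} ⋯ 1_{x₁⋯xₙ}`. -/
def UPA.pe (S : UPA G A) {n : ℕ} (x : Fin n → G) : A :=
  ∏ i : Fin n, S.e (pprodG x ((i : ℕ) + 1))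

/-- `w` is a partial `n`-cochain valued in the ideals `D_{(x₁,…,xₙ)}`. -/
def UPA.IsCochain (S : UPA G A) {n : ℕ} (w : (Fin n → G) → A) : Prop :=
  ∀ x, S.pe x * w x = w x

/-- `w, winv` are mutually inverse partial `n`-cochains (inverses in the unital ideals
`D_{(x₁,…,xₙ)}` with identities `pe x`). -/
def UPA.InvPair (S : UPA G A) {n : ℕ} (w winv : (Fin n → G) → A) : Prop :=
  S.IsCochain w ∧ S.IsCochain winv ∧ ∀ x, w x * winv x = S.pe x

/-- `psel w winv k` is `w` for even `k` and `winv` for odd `k`: it implements the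
exponent `(-1)^k` with inverses taken in the appropriate ideals. -/
def psel {n : ℕ} (w winv : (Fin n → G) → A) (k : ℕ) (y : Fin n → G) : A :=
  if Even k then w y else winv y

/-- The partial coboundary
`(δⁿ w)(x₁,…,x_{n+1}) = α_{x₁}(1_{x₁⁻¹} w(x₂,…,x_{n+1})) ·
∏ᵢ w(x₁,…,xᵢxᵢ₊₁,…,x_{n+1})^{(-1)ᶦ} · w(x₁,…,xₙ)^{(-1)^{n+1}}`,
computed with a chosen ideal-inverse `winv` of `w`. -/
def UPA.pdelta (S : UPA G A) {n : ℕ} (w winv : (Fin n → G) → A)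
    (x : Fin (n + 1) → G) : A :=
  S.act (x 0) (S.e (x 0)⁻¹ * w (Fin.tail x)) *
    (∏ i : Fin n, psel w winv ((i : ℕ) + 1) (dface i x)) *
    psel w winv (n + 1) (Fin.init x)

/-- `w` (with ideal-inverse `winv`) is a partial `n`-cocycle: `δⁿ w = e_{n+1}`. -/
def UPA.IsCocyclePair (S : UPA G A) {n : ℕ} (w winv : (Fin n → G) → A) : Prop :=
  S.InvPair w winv ∧ ∀ x : Fin (n + 1) → G, S.pdelta w winv x = S.pe x

/-- The canonical embedding `φ : A → F(G,A)`, `φ(a)(t) = α_{t⁻¹}(1_t a)`. -/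
def UPA.emb (S : UPA G A) (a : A) : G → A := fun t => S.act t⁻¹ (S.e t * a)

/-- The translation action `β_x(f)(t) = f(x⁻¹ t)` on `F(G,A)`. -/
def tr (x : G) (f : G → A) : G → A := fun t => f (x⁻¹ * t)

/-- The enveloping ring `B = Σ_{g ∈ G} β_g(φ(A)) ⊆ F(G,A)` of the partial action. -/
def UPA.env (S : UPA G A) : NonUnitalSubring (G → A) :=
  NonUnitalSubring.closure {f | ∃ g a, f = tr g (S.emb a)}

/-- `m` is a multiplier of the enveloping ring `B`: it preserves `B`, is additive on `B`,
and satisfies `m(fg) = m(f)g` (in the commutative setting this is a full multiplier). -/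
def UPA.IsMultB (S : UPA G A) (m : (G → A) → (G → A)) : Prop :=
  (∀ f ∈ S.env, m f ∈ S.env) ∧
  (∀ f g, f ∈ S.env → g ∈ S.env → m (f + g) = m f + m g) ∧
  (∀ f g, f ∈ S.env → g ∈ S.env → m (f * g) = m f * g)

/-- `m, m'` are mutually inverse (invertible) multipliers of the enveloping ring `B`. -/
def UPA.InvMultPair (S : UPA G A) (m m' : (G → A) → (G → A)) : Prop :=
  S.IsMultB m ∧ S.IsMultB m' ∧ ∀ f ∈ S.env, m (m' f) = f ∧ m' (m f) = f

/-- The action `β*` of `G` on multipliers of `B`: `β*_x(m) = β_x ∘ m ∘ β_x⁻¹`. -/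
def bstar (x : G) (m : (G → A) → (G → A)) : (G → A) → (G → A) :=
  fun f => tr x (m (tr x⁻¹ f))

/-- `msel u uinv k` is `u` for even `k` and `uinv` for odd `k` (the exponent `(-1)^k`
in the group of invertible multipliers). -/
def msel {n : ℕ} (u uinv : (Fin n → G) → (G → A) → (G → A)) (k : ℕ)
    (y : Fin n → G) : (G → A) → (G → A) :=
  if Even k then u y else uinv y

/-- The (multiplicatively written) classical coboundary of a multiplier-valued cochain:
`(δⁿ u)(x₁,…,x_{n+1}) = β*_{x₁}(u(x₂,…,x_{n+1})) · ∏ᵢ u(x₁,…,xᵢxᵢ₊₁,…)^{(-1)ᶦ} ·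
u(x₁,…,xₙ)^{(-1)^{n+1}}`, the product being composition of multipliers. -/
def mdelta {n : ℕ} (u uinv : (Fin n → G) → (G → A) → (G → A))
    (x : Fin (n + 1) → G) : (G → A) → (G → A) :=
  bstar (x 0) (u (Fin.tail x)) ∘
    (List.ofFn (fun i : Fin n => msel u uinv ((i : ℕ) + 1) (dface i x))).foldr (· ∘ ·) id ∘
    msel u uinv (n + 1) (Fin.init x)

/-- `u` (with pointwise inverse `uinv`) is a classical `n`-cocycle of `G` with values in
the unit group of the multiplier ring of the enveloping ring `B`, for the action `β*`. -/
def UPA.GCocyclePair (S : UPA G A) {n : ℕ}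
    (u uinv : (Fin n → G) → (G → A) → (G → A)) : Prop :=
  (∀ x, S.InvMultPair (u x) (uinv x)) ∧
  ∀ (x : Fin (n + 1) → G), ∀ f ∈ S.env, mdelta u uinv x f = f

/-- `u` is a globalization of the partial `n`-cocycle `w`:
`φ(w(x₁,…,xₙ)) = φ(1_{(x₁,…,xₙ)}) · u(x₁,…,xₙ)`. -/
def UPA.Globalizes (S : UPA G A) {n : ℕ}
    (u : (Fin n → G) → (G → A) → (G → A)) (w : (Fin n → G) → A) : Prop :=
  ∀ x, u x (S.emb (S.pe x)) = S.emb (w x)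

/-!
Write `θ_s(a) = α_s(1_{s⁻¹} a)`, so that `φ(a)(t) = θ_{t⁻¹}(a)`. Every `f` in the enveloping ring
`B` satisfies `f(t) θ_{t⁻¹}(b) = θ_{t⁻¹}(f(1) b)`, so a multiplier `m` of `B` acts on `φ(A)` as
multiplication by `m(φ(1))(1) ∈ A`. For a globalization `u` these elements form `w̃`, and
evaluating `δu = 1` on `φ(1)` at the point `x₁` gives (a).

Conversely, let `δ'` be the coboundary of the bar complex with the face
`(x₁,…,x_{n+1}) ↦ (x₂,…,x_{n+1})` omitted, so that `δ'δ' = 1` and (a) reads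
`θ_{x₁}(w̃(x₂,…,x_{n+1})) = 1_{x₁} (δ'w̃)(x)⁻¹`. Multiplication by `t ↦ (δ'w̃)(t⁻¹, y)⁻¹` is an
invertible multiplier `u(y)` of `B`; the classical coboundary of `u` at `t` is
`(δ'δ'w̃)(t⁻¹, x) = 1`, and `u(y)` restricts to `w̃(y)` on `φ(A)`, so `u` globalizes `w`.
-/

lemma tr_one {B : Type*} (f : G → B) : tr 1 f = f := by
  funext t; rw [tr, inv_one, one_mul]

lemma tr_tr {B : Type*} (x g : G) (f : G → B) : tr x (tr g f) = tr (x * g) f := by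
  funext t; simp only [tr, mul_inv_rev, mul_assoc]

namespace UPA

variable (S : UPA G A)

def theta (s : G) (a : A) : A := S.act s (S.e s⁻¹ * a)

lemma e_mul_e_mul (g : G) (a : A) : S.e g * (S.e g * a) = S.e g * a := by
  rw [← mul_assoc, S.idem]

lemma theta_e_mul (s : G) (a : A) : S.theta s (S.e s⁻¹ * a) = S.theta s a := by
  rw [theta, theta, e_mul_e_mul]

lemma e_mul_theta (s : G) (a : A) : S.e s * S.theta s a = S.theta s a :=
  S.act_mem s _ (S.e_mul_e_mul _ _)

lemma theta_one_left (a : A) : S.theta 1 a = a := by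
  rw [theta, inv_one, S.e_one, one_mul, S.act_one]

lemma theta_e (s g : G) : S.theta s (S.e g) = S.e s * S.e (s * g) :=
  S.act_e s g

lemma theta_one (s : G) : S.theta s 1 = S.e s := by
  simpa [S.e_one, S.idem] using S.theta_e s 1

lemma theta_e_inv (s : G) : S.theta s (S.e s⁻¹) = S.e s := by
  rw [theta_e, mul_inv_cancel, S.e_one, mul_one]

lemma theta_add (s : G) (a b : A) : S.theta s (a + b) = S.theta s a + S.theta s b := by
  rw [theta, mul_add]
  exact S.act_add s _ _ (S.e_mul_e_mul _ _) (S.e_mul_e_mul _ _)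

lemma theta_zero (s : G) : S.theta s 0 = 0 :=
  (AddMonoidHom.mk' (S.theta s) (S.theta_add s)).map_zero

lemma theta_neg (s : G) (a : A) : S.theta s (-a) = -S.theta s a :=
  (AddMonoidHom.mk' (S.theta s) (S.theta_add s)).map_neg a

lemma theta_mul (s : G) (a b : A) : S.theta s (a * b) = S.theta s a * S.theta s b := by
  rw [theta, theta, theta, ← S.act_mul s _ _ (S.e_mul_e_mul _ _) (S.e_mul_e_mul _ _),
    mul_mul_mul_comm, S.idem]

lemma e_mul_theta_eq_theta_e_mul (k s : G) (a : A) :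
    S.e k * S.theta s a = S.theta s (S.e (s⁻¹ * k) * a) := by
  rw [theta_mul, theta_e, mul_inv_cancel_left, mul_right_comm, e_mul_theta, mul_comm]

lemma theta_theta (h g : G) (a : A) : S.theta h (S.theta g a) = S.e h * S.theta (h * g) a := by
  have hcomp : S.act h (S.act g (S.e g⁻¹ * (S.e (g⁻¹ * h⁻¹) * a)))
      = S.act (h * g) (S.e g⁻¹ * (S.e (g⁻¹ * h⁻¹) * a)) :=
    S.act_comp h g _ <| by
      linear_combination (S.e (g⁻¹ * h⁻¹) * S.e (g⁻¹ * h⁻¹) * a) * S.idem g⁻¹ +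
        (S.e g⁻¹ * a) * S.idem (g⁻¹ * h⁻¹)
  calc S.theta h (S.theta g a)
      = S.act h (S.theta g (S.e (g⁻¹ * h⁻¹) * a)) := by
        rw [theta, e_mul_theta_eq_theta_e_mul]
    _ = S.theta (h * g) (S.e g⁻¹ * a) := by
        rw [theta, hcomp, theta, mul_inv_rev, mul_left_comm]
    _ = S.e h * S.theta (h * g) a := by
        rw [theta_mul, theta_e, mul_inv_cancel_right, mul_comm (S.e _), mul_assoc, e_mul_theta]

lemma emb_apply (a : A) (t : G) : S.emb a t = S.theta t⁻¹ a := by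
  rw [emb, theta, inv_inv]

lemma emb_apply_one (a : A) : S.emb a 1 = a := by
  rw [emb_apply, inv_one, theta_one_left]

lemma tr_emb_mem (g : G) (a : A) : tr g (S.emb a) ∈ S.env :=
  NonUnitalSubring.subset_closure ⟨g, a, rfl⟩

lemma emb_mem (a : A) : S.emb a ∈ S.env := by
  simpa only [tr_one] using S.tr_emb_mem 1 a

lemma tr_mem_env (x : G) {f : G → A} (hf : f ∈ S.env) : tr x f ∈ S.env := by
  induction hf using NonUnitalSubring.closure_induction with
  | mem f hf => obtain ⟨g, a, rfl⟩ := hf; rw [tr_tr]; exact S.tr_emb_mem _ _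
  | zero => exact zero_mem _
  | add f h _ _ hf hh => exact add_mem hf hh
  | neg f _ hf => exact neg_mem hf
  | mul f h _ _ hf hh => exact mul_mem hf hh

lemma tr_emb_apply (g : G) (a : A) (t : G) : tr g (S.emb a) t = S.theta (t⁻¹ * g) a := by
  rw [tr, emb_apply, mul_inv_rev, inv_inv]

lemma mul_theta_of_mem_env {f : G → A} (hf : f ∈ S.env) (t : G) (b : A) :
    f t * S.theta t⁻¹ b = S.theta t⁻¹ (f 1 * b) := by
  induction hf using NonUnitalSubring.closure_induction generalizing b with
  | mem f hf =>
    obtain ⟨g, a, rfl⟩ := hf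
    rw [tr_emb_apply, tr_emb_apply, inv_one, one_mul, theta_mul, theta_theta, mul_comm (S.e _),
      mul_assoc, e_mul_theta]
  | zero => simp only [Pi.zero_apply, zero_mul, theta_zero]
  | add f h _ _ hf hh => simp only [Pi.add_apply, add_mul, hf, hh, theta_add]
  | neg f _ hf => simp only [Pi.neg_apply, neg_mul, hf, theta_neg]
  | mul f h _ _ hf hh => simp only [Pi.mul_apply, mul_assoc, hh, hf]

lemma mul_emb_of_mem_env {f : G → A} (hf : f ∈ S.env) (b : A) :
    f * S.emb b = S.emb (f 1 * b) := by
  funext t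
  simp only [Pi.mul_apply, emb_apply, S.mul_theta_of_mem_env hf]

lemma theta_apply_of_mem_env {f : G → A} (hf : f ∈ S.env) (s : G) :
    S.theta s (f s) = S.e s * f 1 := by
  have h := S.mul_theta_of_mem_env hf s 1
  rw [theta_one, mul_one, mul_comm] at h
  rw [← theta_e_mul, h, theta_theta, mul_inv_cancel, theta_one_left]

variable {S}

lemma IsMultB.apply_one {m : (G → A) → (G → A)} (hm : S.IsMultB m) {f : G → A}
    (hf : f ∈ S.env) : m f 1 = m (S.emb 1) 1 * f 1 := by
  have hsplit : f * S.emb 1 = S.emb 1 * S.emb (f 1) := by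
    rw [S.mul_emb_of_mem_env hf, S.mul_emb_of_mem_env (S.emb_mem 1), emb_apply_one, mul_one,
      one_mul]
  have h := congrFun (congrArg m hsplit) 1
  rwa [hm.2.2 _ _ hf (S.emb_mem 1), hm.2.2 _ _ (S.emb_mem 1) (S.emb_mem _), Pi.mul_apply,
    Pi.mul_apply, emb_apply_one, emb_apply_one, mul_one] at h

lemma foldr_comp_mem_env_and_apply_one (ms : List ((G → A) → (G → A)))
    (hms : ∀ m ∈ ms, S.IsMultB m) {f : G → A} (hf : f ∈ S.env) :
    ms.foldr (· ∘ ·) id f ∈ S.env ∧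
      ms.foldr (· ∘ ·) id f 1 = (ms.map fun m => m (S.emb 1) 1).prod * f 1 := by
  induction ms with
  | nil => exact ⟨hf, by simp⟩
  | cons m ms ih =>
    obtain ⟨hmem, hval⟩ := ih fun m' hm' => hms m' (List.mem_cons_of_mem _ hm')
    have hm := hms m List.mem_cons_self
    refine ⟨hm.1 _ hmem, ?_⟩
    rw [List.foldr_cons, Function.comp_apply, hm.apply_one hmem, hval, List.map_cons,
      List.prod_cons, mul_assoc]

lemma InvMultPair.apply_one_mul_apply_one {m m' : (G → A) → (G → A)} (hp : S.InvMultPair m m') :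
    m (S.emb 1) 1 * m' (S.emb 1) 1 = 1 := by
  rw [← hp.1.apply_one (hp.2.1.1 _ (S.emb_mem 1)), (hp.2.2 _ (S.emb_mem 1)).1,
    emb_apply_one]

lemma isMultB_msel {N : ℕ} {u uinv : (Fin N → G) → (G → A) → (G → A)}
    (hu : ∀ y, S.InvMultPair (u y) (uinv y)) (k : ℕ) (y : Fin N → G) :
    S.IsMultB (msel u uinv k y) := by
  unfold msel; split
  exacts [(hu y).1, (hu y).2.1]

lemma msel_apply_emb_one {N : ℕ} (u uinv : (Fin N → G) → (G → A) → (G → A)) (k : ℕ)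
    (y : Fin N → G) :
    msel u uinv k y (S.emb 1) 1 =
      psel (fun y => u y (S.emb 1) 1) (fun y => uinv y (S.emb 1) 1) k y := by
  unfold msel psel; split <;> rfl

lemma GCocyclePair.theta_mul_prod_eq_e {N : ℕ} {u uinv : (Fin N → G) → (G → A) → (G → A)}
    (hgc : S.GCocyclePair u uinv) (x : Fin (N + 1) → G) :
    let wt := fun y => u y (S.emb 1) 1
    let wtinv := fun y => uinv y (S.emb 1) 1
    S.theta (x 0) (wt (Fin.tail x)) * (∏ i : Fin N, psel wt wtinv ((i : ℕ) + 1) (dface i x)) *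
      psel wt wtinv (N + 1) (Fin.init x) = S.e (x 0) := by
  intro wt wtinv
  set ms := List.ofFn fun i : Fin N => msel u uinv ((i : ℕ) + 1) (dface i x)
  obtain ⟨hg, hg1⟩ := S.foldr_comp_mem_env_and_apply_one ms
    (by simp only [ms, List.mem_ofFn]; rintro _ ⟨i, rfl⟩; exact isMultB_msel hgc.1 _ _)
    ((isMultB_msel hgc.1 (N + 1) (Fin.init x)).1 _ (S.emb_mem 1))
  set g := ms.foldr (· ∘ ·) id (msel u uinv (N + 1) (Fin.init x) (S.emb 1))
  have hg1' : g 1 = (∏ i : Fin N, psel wt wtinv ((i : ℕ) + 1) (dface i x)) *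
      psel wt wtinv (N + 1) (Fin.init x) := by
    rw [hg1, List.map_ofFn, List.prod_ofFn]
    simp only [Function.comp_def, msel_apply_emb_one, wt, wtinv]
  have hδ : u (Fin.tail x) (tr (x 0)⁻¹ g) 1 = S.e (x 0)⁻¹ := by
    have := congrFun (hgc.2 x (S.emb 1) (S.emb_mem 1)) (x 0)
    rwa [mdelta, Function.comp_apply, Function.comp_apply, bstar, tr, inv_mul_cancel,
      emb_apply, theta_one] at this
  rw [(hgc.1 _).1.apply_one (S.tr_mem_env _ hg), tr, inv_inv, mul_one] at hδ
  have hθ := congrArg (S.theta (x 0)) hδ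
  rw [theta_mul, S.theta_apply_of_mem_env hg, theta_e_inv, ← mul_assoc, mul_comm _ (S.e _),
    e_mul_theta] at hθ
  rw [mul_assoc, ← hg1', ← hθ]

variable (S) in
lemma exists_unit_cochain_of_globalization {N : ℕ} (w : (Fin N → G) → A)
    {u uinv : (Fin N → G) → (G → A) → (G → A)}
    (hgc : S.GCocyclePair u uinv) (hglob : S.Globalizes u w) :
    ∃ wt wtinv : (Fin N → G) → A,
      (∀ x, wt x * wtinv x = 1) ∧
      (∀ x : Fin (N + 1) → G,
        S.act (x 0) (S.e (x 0)⁻¹ * wt (Fin.tail x)) *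
          (∏ i : Fin N, psel wt wtinv ((i : ℕ) + 1) (dface i x)) *
          psel wt wtinv (N + 1) (Fin.init x) = S.e (x 0)) ∧
      (∀ x, w x = S.pe x * wt x) := by
  refine ⟨fun y => u y (S.emb 1) 1, fun y => uinv y (S.emb 1) 1,
    fun x => (hgc.1 x).apply_one_mul_apply_one, hgc.theta_mul_prod_eq_e,
    fun x => ?_⟩
  have h := (hgc.1 x).1.apply_one (S.emb_mem (S.pe x))
  rw [hglob x, emb_apply_one, emb_apply_one] at h
  rw [h, mul_comm]

end UPA

/-- The faces of the bar complex other than `(z₀,…,z_m) ↦ (z₁,…,z_m)`: for `j < m` the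
`j`-th face multiplies `z_j z_{j+1}`, the last one drops `z_m`. -/
def face {m : ℕ} (j : Fin (m + 1)) (z : Fin (m + 1) → G) : Fin m → G :=
  if h : (j : ℕ) < m then dface ⟨j, h⟩ z else Fin.init z

lemma face_apply {m : ℕ} (j : Fin (m + 1)) (z : Fin (m + 1) → G) (k : Fin m) :
    face j z k = if (k : ℕ) < j then z k.castSucc
      else if (k : ℕ) = j then z k.castSucc * z k.succ else z k.succ := by
  unfold face
  split_ifs with hj h1 h2 h2
  · simp [dface, h1]
  · have : k = ⟨j, hj⟩ := Fin.ext h2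
    simp [dface, this]
  · have : k ≠ ⟨j, hj⟩ := fun hc => h2 (by rw [hc])
    simp [dface, h1, this]
  all_goals first | rfl | omega

lemma face_castSucc {m : ℕ} (i : Fin m) (z : Fin (m + 1) → G) :
    face i.castSucc z = dface i z := by
  rw [face, dif_pos (by exact i.isLt)]
  rfl

lemma face_last {m : ℕ} (z : Fin (m + 1) → G) : face (Fin.last m) z = Fin.init z := by
  rw [face, dif_neg (by simp)]

lemma face_succ_cons {m : ℕ} (s : G) (z : Fin (m + 1) → G) (i : Fin (m + 1)) :
    face i.succ (Fin.cons s z) = Fin.cons s (face i z) := by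
  funext k
  refine Fin.cases ?_ (fun k => ?_) k
  · simp [face_apply]
  · simp only [face_apply, Fin.val_succ, Fin.cons_succ, add_lt_add_iff_right,
      add_left_inj, ← Fin.succ_castSucc]

lemma face_zero_cons {m : ℕ} (s : G) (z : Fin (m + 1) → G) :
    face 0 (Fin.cons s z) = Fin.cons (s * z 0) (Fin.tail z) := by
  funext k
  refine Fin.cases ?_ (fun k => ?_) k
  · simp [face_apply]
  · simp [face_apply, Fin.tail]

lemma face_face {m : ℕ} (z : Fin (m + 2) → G) {a b : ℕ} (hab : a < b) (hb : b < m + 2) :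
    face (⟨a, by omega⟩ : Fin (m + 1)) (face ⟨b, hb⟩ z) =
      face (⟨b - 1, by omega⟩ : Fin (m + 1)) (face ⟨a, by omega⟩ z) := by
  funext k
  simp only [face_apply, Fin.val_castSucc, Fin.val_succ, Fin.succ_castSucc]
  split_ifs <;> first | rfl | omega | rw [mul_assoc]

/-- The coboundary `δ'` of the bar complex with trivial coefficients and the first face omitted. -/
def altFaceProd {M : Type*} [CommGroup M] {N : ℕ} (W : (Fin N → G) → M)
    (z : Fin (N + 1) → G) : M :=
  ∏ i : Fin (N + 1), W (face i z) ^ ((-1 : ℤ) ^ ((i : ℕ) + 1))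

lemma zpow_neg_one_pow_mul_zpow_neg_one_pow_succ {M : Type*} [CommGroup M] (a : M) (k : ℕ) :
    a ^ ((-1 : ℤ) ^ k) * a ^ ((-1 : ℤ) ^ (k + 1)) = 1 := by
  rw [← zpow_add, pow_succ, mul_neg_one, add_neg_cancel, zpow_zero]

lemma altFaceProd_altFaceProd {M : Type*} [CommGroup M] {N : ℕ} (W : (Fin N → G) → M) :
    altFaceProd (altFaceProd W) = 1 := by
  funext Z
  have hpow : ∀ (j : Fin (N + 2)) (i : Fin (N + 1)),
      (W (face i (face j Z)) ^ ((-1 : ℤ) ^ ((i : ℕ) + 1))) ^ ((-1 : ℤ) ^ ((j : ℕ) + 1)) =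
        W (face i (face j Z)) ^ ((-1 : ℤ) ^ ((i : ℕ) + j)) := by
    intro j i
    rw [← zpow_mul, ← pow_add, show (i : ℕ) + 1 + (j + 1) = i + j + 2 by ring, pow_add,
      neg_one_sq, mul_one]
  simp only [altFaceProd, ← Finset.prod_zpow, hpow, Pi.one_apply]
  rw [← Finset.prod_product', Finset.univ_product_univ]
  -- By `face_face`, the term at `(j, i)` with `i < j` cancels the one at `(i, j - 1)`.
  refine Finset.prod_involution
    (fun p _ => if h : (p.2 : ℕ) < p.1
      then (⟨p.2, by omega⟩, ⟨(p.1 : ℕ) - 1, by omega⟩)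
      else (⟨(p.2 : ℕ) + 1, by omega⟩, ⟨p.1, by omega⟩))
    ?_ ?_ (fun _ _ => Finset.mem_univ _) ?_
  · rintro ⟨⟨j, hj⟩, ⟨i, hi⟩⟩ _
    by_cases h : i < j
    · simp only [dif_pos h]
      rw [← face_face Z h hj, show i + j = j - 1 + i + 1 by omega, mul_comm]
      exact zpow_neg_one_pow_mul_zpow_neg_one_pow_succ _ _
    · simp only [dif_neg h]
      simp only [face_face Z (show j < i + 1 by omega), Nat.add_sub_cancel]
      rw [show j + (i + 1) = i + j + 1 by omega]
      exact zpow_neg_one_pow_mul_zpow_neg_one_pow_succ _ _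
  · rintro ⟨⟨j, hj⟩, ⟨i, hi⟩⟩ _ _
    by_cases h : i < j <;>
      simp only [h, dite_true, dite_false, ne_eq, Prod.mk.injEq, Fin.mk.injEq, not_and] <;> omega
  · rintro ⟨⟨j, hj⟩, ⟨i, hi⟩⟩ _
    by_cases h : i < j
    · simp only [h, dite_true, dite_false, show ¬j - 1 < i by omega, Prod.mk.injEq, Fin.mk.injEq,
        and_true]
      omega
    · simp [h, show j < i + 1 by omega]

lemma inv_zpow_neg_one_pow {M : Type*} [CommGroup M] (a : M) (k : ℕ) :
    a⁻¹ ^ ((-1 : ℤ) ^ k) = a ^ ((-1 : ℤ) ^ (k + 1)) := by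
  rw [inv_zpow', pow_succ, mul_neg_one]

lemma prod_altFaceProd_face_succ {M : Type*} [CommGroup M] {N : ℕ} (W : (Fin N → G) → M)
    (Z : Fin (N + 2) → G) :
    ∏ i : Fin (N + 1), (altFaceProd W (face i.succ Z))⁻¹ ^ ((-1 : ℤ) ^ ((i : ℕ) + 1)) =
      altFaceProd W (face 0 Z) := by
  have h := congrFun (altFaceProd_altFaceProd W) Z
  rw [altFaceProd, Fin.prod_univ_succ, Fin.val_zero, zero_add, pow_one, zpow_neg_one,
    Pi.one_apply, inv_mul_eq_one] at h
  simp only [h, inv_zpow_neg_one_pow, Fin.val_succ]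

namespace UPA

variable {S : UPA G A}

lemma theta_units_inv {s : G} {u v : Aˣ} (h : S.theta s u = S.e s * v) :
    S.theta s ↑u⁻¹ = S.e s * ↑v⁻¹ := by
  have hX : S.theta s ↑u⁻¹ * (S.e s * v) = S.e s := by
    rw [← h, ← theta_mul, Units.inv_mul, theta_one]
  linear_combination (↑v⁻¹ : A) * hX - (S.theta s ↑u⁻¹ * S.e s) * v.mul_inv -
    S.e_mul_theta s ↑u⁻¹

lemma theta_units_pow {s : G} {u v : Aˣ} (h : S.theta s u = S.e s * v) (k : ℕ) :
    S.theta s ↑(u ^ k) = S.e s * ↑(v ^ k) := by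
  induction k with
  | zero => rw [pow_zero, pow_zero, Units.val_one, theta_one, mul_one]
  | succ k ih =>
    rw [pow_succ, pow_succ, Units.val_mul, Units.val_mul, theta_mul, ih, h]
    linear_combination (↑(v ^ k) * ↑v : A) * S.idem s

lemma theta_units_zpow {s : G} {u v : Aˣ} (h : S.theta s u = S.e s * v) (k : ℤ) :
    S.theta s ↑(u ^ k) = S.e s * ↑(v ^ k) := by
  cases k with
  | ofNat k => exact theta_units_pow h k
  | negSucc k => rw [zpow_negSucc, zpow_negSucc]; exact theta_units_inv (theta_units_pow h _)

lemma theta_prod {ι : Type*} {s : G} {f c : ι → A} (t : Finset ι)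
    (h : ∀ i ∈ t, S.theta s (f i) = S.e s * c i) :
    S.theta s (∏ i ∈ t, f i) = S.e s * ∏ i ∈ t, c i := by
  induction t using Finset.cons_induction with
  | empty => rw [Finset.prod_empty, Finset.prod_empty, theta_one, mul_one]
  | cons i t hi ih =>
    rw [Finset.prod_cons, Finset.prod_cons, theta_mul, h i (Finset.mem_cons_self i t),
      ih fun j hj => h j (Finset.mem_cons_of_mem hj)]
    linear_combination (c i * ∏ j ∈ t, c j) * S.idem s

def PartialCoboundaryEqE (S : UPA G A) {N : ℕ} (W : (Fin N → G) → Aˣ) : Prop :=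
  ∀ x : Fin (N + 1) → G, S.theta (x 0) (W (Fin.tail x)) * altFaceProd W x = S.e (x 0)

lemma PartialCoboundaryEqE.theta_eq {N : ℕ} {W : (Fin N → G) → Aˣ}
    (hW : S.PartialCoboundaryEqE W) (s : G) (z : Fin N → G) :
    S.theta s (W z) = S.e s * ↑(altFaceProd W (Fin.cons s z))⁻¹ := by
  have h := hW (Fin.cons s z)
  rw [Fin.cons_zero, Fin.tail_cons] at h
  exact (Units.eq_mul_inv_iff_mul_eq _).2 h

lemma PartialCoboundaryEqE.theta_altFaceProd {N : ℕ} {W : (Fin N → G) → Aˣ}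
    (hW : S.PartialCoboundaryEqE W) (s : G) (z : Fin (N + 1) → G) :
    S.theta s ↑(altFaceProd W z) = S.e s * ↑(altFaceProd W (Fin.cons (s * z 0) (Fin.tail z))) := by
  rw [altFaceProd, Units.coe_prod,
    theta_prod _ fun i _ => theta_units_zpow (hW.theta_eq s (face i z)) ((-1 : ℤ) ^ ((i : ℕ) + 1)),
    ← Units.coe_prod, ← face_zero_cons, ← prod_altFaceProd_face_succ]
  simp only [face_succ_cons]

def IsCoherent (S : UPA G A) (U : G → Aˣ) : Prop :=
  ∀ s t : G, S.theta s (U t) = S.e s * U (t * s⁻¹)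

section Coherent

variable {U : G → Aˣ}

lemma IsCoherent.inv (hU : S.IsCoherent U) : S.IsCoherent U⁻¹ :=
  fun s t => theta_units_inv (hU s t)

lemma IsCoherent.smul_tr_emb (hU : S.IsCoherent U) (g : G) (a : A) :
    U • tr g (S.emb a) = tr g (S.emb (U g * a)) := by
  funext t
  rw [Pi.smul_apply', Units.smul_def, smul_eq_mul, tr_emb_apply, tr_emb_apply, theta_mul, hU,
    mul_inv_rev, inv_inv, mul_inv_cancel_left, mul_comm (S.e _), mul_assoc, e_mul_theta]

lemma IsCoherent.smul_mem_env (hU : S.IsCoherent U) {f : G → A} (hf : f ∈ S.env) :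
    U • f ∈ S.env := by
  induction hf using NonUnitalSubring.closure_induction with
  | mem f hf => obtain ⟨g, a, rfl⟩ := hf; rw [hU.smul_tr_emb]; exact S.tr_emb_mem _ _
  | zero => rw [smul_zero]; exact zero_mem _
  | add f h _ _ hf hh => rw [smul_add]; exact add_mem hf hh
  | neg f _ hf => rw [smul_neg]; exact neg_mem hf
  | mul f h _ hh hf _ => rw [← smul_mul_assoc]; exact mul_mem hf hh

lemma IsCoherent.invMultPair (hU : S.IsCoherent U) :
    S.InvMultPair (U • · : (G → A) → G → A) (U⁻¹ • ·) :=
  ⟨⟨fun _ hf => hU.smul_mem_env hf, fun _ _ _ _ => smul_add _ _ _,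
      fun _ _ _ _ => (smul_mul_assoc _ _ _).symm⟩,
    ⟨fun _ hf => hU.inv.smul_mem_env hf, fun _ _ _ _ => smul_add _ _ _,
      fun _ _ _ _ => (smul_mul_assoc _ _ _).symm⟩,
    fun f _ => ⟨smul_inv_smul U f, inv_smul_smul U f⟩⟩

end Coherent

end UPA

lemma msel_smul {X : Type*} {N : ℕ} (U : (Fin N → X) → X → Aˣ) (k : ℕ) (y : Fin N → X) :
    msel (fun y => (U y • · : (X → A) → X → A)) (fun y => ((U y)⁻¹ • ·)) k y =
      (U y ^ ((-1 : ℤ) ^ k) • ·) := by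
  unfold msel
  split_ifs with hk
  · rw [hk.neg_one_pow, zpow_one]
  · rw [(Nat.not_even_iff_odd.mp hk).neg_one_pow, zpow_neg_one]

lemma foldr_comp_smul {X : Type*} (l : List (X → Aˣ)) :
    (l.map fun V => (V • · : (X → A) → X → A)).foldr (· ∘ ·) id = (l.prod • ·) := by
  induction l with
  | nil => funext f; exact (one_smul _ f).symm
  | cons V l ih => funext f; simp only [List.map_cons, List.foldr_cons, ih, List.prod_cons,
      Function.comp_apply, mul_smul]

lemma bstar_smul (x : G) (V : G → Aˣ) :
    bstar x (V • · : (G → A) → G → A) = ((fun t => V (x⁻¹ * t)) • ·) := by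
  funext f t
  simp only [bstar, tr, Pi.smul_apply', inv_inv, mul_inv_cancel_left]

lemma mdelta_smul {N : ℕ} (U : (Fin N → G) → G → Aˣ) (x : Fin (N + 1) → G) :
    mdelta (fun y => (U y • · : (G → A) → G → A)) (fun y => ((U y)⁻¹ • ·)) x =
      (((fun t => U (Fin.tail x) ((x 0)⁻¹ * t)) *
        (∏ i : Fin N, U (dface i x) ^ ((-1 : ℤ) ^ ((i : ℕ) + 1))) *
          U (Fin.init x) ^ ((-1 : ℤ) ^ (N + 1))) • ·) := by
  funext f
  simp only [mdelta, msel_smul, bstar_smul, Function.comp_apply]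
  have hlist : (List.ofFn fun i : Fin N => (U (dface i x) ^ ((-1 : ℤ) ^ ((i : ℕ) + 1)) • · :
      (G → A) → G → A)) =
      (List.ofFn fun i : Fin N => U (dface i x) ^ ((-1 : ℤ) ^ ((i : ℕ) + 1))).map (· • ·) := by
    rw [List.map_ofFn]; rfl
  rw [hlist, foldr_comp_smul, List.prod_ofFn, mul_smul, mul_smul]

def globalCochain {M : Type*} [CommGroup M] {N : ℕ} (W : (Fin N → G) → M) (y : Fin N → G) :
    G → M :=
  fun t => (altFaceProd W (Fin.cons t⁻¹ y))⁻¹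

lemma globalCochain_coboundary {M : Type*} [CommGroup M] {N : ℕ} (W : (Fin N → G) → M)
    (x : Fin (N + 1) → G) :
    (fun t => globalCochain W (Fin.tail x) ((x 0)⁻¹ * t)) *
      (∏ i : Fin N, globalCochain W (dface i x) ^ ((-1 : ℤ) ^ ((i : ℕ) + 1))) *
        globalCochain W (Fin.init x) ^ ((-1 : ℤ) ^ (N + 1)) = 1 := by
  funext t
  have h := congrFun (altFaceProd_altFaceProd W) (Fin.cons t⁻¹ x)
  rw [altFaceProd, Fin.prod_univ_succ, Fin.prod_univ_castSucc, Pi.one_apply] at h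
  rw [Pi.one_apply, ← h]
  simp only [Pi.mul_apply, Finset.prod_apply, Pi.pow_apply, globalCochain, inv_zpow_neg_one_pow,
    Fin.val_zero, zero_add, pow_one, zpow_neg_one, Fin.val_succ, Fin.val_castSucc, Fin.val_last,
    face_succ_cons, face_castSucc, face_last, face_zero_cons, mul_inv_rev, inv_inv, mul_assoc]

namespace UPA

variable {S : UPA G A}

lemma PartialCoboundaryEqE.isCoherent_globalCochain {N : ℕ} {W : (Fin N → G) → Aˣ}
    (hW : S.PartialCoboundaryEqE W) (y : Fin N → G) : S.IsCoherent (globalCochain W y) := by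
  intro s t
  rw [globalCochain, theta_units_inv (hW.theta_altFaceProd s _), Fin.cons_zero, Fin.tail_cons,
    globalCochain, mul_inv_rev, inv_inv]

lemma PartialCoboundaryEqE.globalCochain_apply_one {N : ℕ} {W : (Fin N → G) → Aˣ}
    (hW : S.PartialCoboundaryEqE W) (y : Fin N → G) : globalCochain W y 1 = W y := by
  have h := hW.theta_eq 1 y
  rw [theta_one_left, S.e_one, one_mul] at h
  rw [globalCochain, inv_one]
  exact Units.ext h.symm

lemma PartialCoboundaryEqE.gCocyclePair {N : ℕ} {W : (Fin N → G) → Aˣ}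
    (hW : S.PartialCoboundaryEqE W) :
    S.GCocyclePair (fun y => (globalCochain W y • ·)) (fun y => ((globalCochain W y)⁻¹ • ·)) :=
  ⟨fun y => (hW.isCoherent_globalCochain y).invMultPair, fun x f _ => by
    rw [mdelta_smul, globalCochain_coboundary]; exact one_smul _ f⟩

lemma PartialCoboundaryEqE.globalizes {N : ℕ} {W : (Fin N → G) → Aˣ}
    (hW : S.PartialCoboundaryEqE W) {w : (Fin N → G) → A} (hw : ∀ x, w x = S.pe x * W x) :
    S.Globalizes (fun y => (globalCochain W y • ·)) w := by
  intro x
  have h := (hW.isCoherent_globalCochain x).smul_tr_emb 1 (S.pe x)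
  rwa [tr_one, tr_one, hW.globalCochain_apply_one, mul_comm, ← hw] at h

lemma psel_units {X : Type*} {N : ℕ} (W : (Fin N → X) → Aˣ) (k : ℕ) (y : Fin N → X) :
    psel (fun y => (W y : A)) (fun y => ↑(W y)⁻¹) k y = ↑(W y ^ ((-1 : ℤ) ^ k)) := by
  unfold psel
  split_ifs with hk
  · rw [hk.neg_one_pow, zpow_one]
  · rw [(Nat.not_even_iff_odd.mp hk).neg_one_pow, zpow_neg_one]

lemma coe_altFaceProd {N : ℕ} (W : (Fin N → G) → Aˣ) (x : Fin (N + 1) → G) :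
    ((altFaceProd W x : Aˣ) : A) =
      (∏ i : Fin N, psel (fun y => (W y : A)) (fun y => ↑(W y)⁻¹) ((i : ℕ) + 1) (dface i x)) *
        psel (fun y => (W y : A)) (fun y => ↑(W y)⁻¹) (N + 1) (Fin.init x) := by
  rw [altFaceProd, Fin.prod_univ_castSucc, Units.val_mul, Units.coe_prod]
  simp only [psel_units, face_castSucc, face_last, Fin.val_castSucc, Fin.val_last]

variable (S) in
lemma exists_globalization_of_unit_cochain {N : ℕ} (w : (Fin N → G) → A)
    (wt wtinv : (Fin N → G) → A) (hunit : ∀ x, wt x * wtinv x = 1)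
    (ha : ∀ x : Fin (N + 1) → G,
      S.act (x 0) (S.e (x 0)⁻¹ * wt (Fin.tail x)) *
        (∏ i : Fin N, psel wt wtinv ((i : ℕ) + 1) (dface i x)) *
        psel wt wtinv (N + 1) (Fin.init x) = S.e (x 0))
    (hb : ∀ x, w x = S.pe x * wt x) :
    ∃ u uinv : (Fin N → G) → (G → A) → (G → A), S.GCocyclePair u uinv ∧ S.Globalizes u w := by
  let W : (Fin N → G) → Aˣ := fun y => ⟨wt y, wtinv y, hunit y, (mul_comm _ _).trans (hunit y)⟩
  have hW : S.PartialCoboundaryEqE W := fun x => by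
    rw [coe_altFaceProd, ← mul_assoc]
    exact ha x
  exact ⟨_, _, hW.gCocyclePair, hW.globalizes hb⟩

end UPA

theorem stmt11_general (S : UPA G A) (n : ℕ) (w : (Fin (n + 1) → G) → A) :
    (∃ u uinv : (Fin (n + 1) → G) → (G → A) → (G → A),
      S.GCocyclePair u uinv ∧ S.Globalizes u w) ↔
    ∃ wt wtinv : (Fin (n + 1) → G) → A,
      (∀ x, wt x * wtinv x = 1) ∧
      (∀ x : Fin (n + 2) → G,
        S.act (x 0) (S.e (x 0)⁻¹ * wt (Fin.tail x)) *
          (∏ i : Fin (n + 1), psel wt wtinv ((i : ℕ) + 1) (dface i x)) *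
          psel wt wtinv (n + 2) (Fin.init x) = S.e (x 0)) ∧
      (∀ x, w x = S.pe x * wt x) :=
  ⟨fun ⟨_, _, hgc, hglob⟩ => S.exists_unit_cochain_of_globalization w hgc hglob,
    fun ⟨wt, wtinv, hunit, ha, hb⟩ =>
      S.exists_globalization_of_unit_cochain w wt wtinv hunit ha hb⟩

/-- (Theorem 2.3 of the paper, for `n = N + 1 ≥ 1`.)  Let `α` be a unital partial action of
`G` on the commutative unital ring `A` and `w ∈ Zⁿ(G, A)` a partial `n`-cocycle (with a
chosen ideal-inverse `winv`).  Then `w` is globalizable (i.e. admits a globalization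
`u ∈ Zⁿ(G, U(M(B)))` for the enveloping action) if and only if there is a function
`w̃ : Gⁿ → U(A)` such that for all `x₁,…,x_{n+1}`:
(a) `α_{x₁}(1_{x₁⁻¹} w̃(x₂,…,x_{n+1})) ∏ᵢ w̃(x₁,…,xᵢxᵢ₊₁,…)^{(-1)ᶦ} w̃(x₁,…,xₙ)^{(-1)^{n+1}}
     = 1_{x₁}`, and
(b) `w(x₁,…,xₙ) = 1_{(x₁,…,xₙ)} w̃(x₁,…,xₙ)`. -/
theorem stmt11 (S : UPA G A) (n : ℕ) (w winv : (Fin (n + 1) → G) → A)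
    (hw : S.IsCocyclePair w winv) :
    (∃ u uinv : (Fin (n + 1) → G) → (G → A) → (G → A),
      S.GCocyclePair u uinv ∧ S.Globalizes u w) ↔
    ∃ wt wtinv : (Fin (n + 1) → G) → A,
      (∀ x, wt x * wtinv x = 1) ∧
      (∀ x : Fin (n + 2) → G,
        S.act (x 0) (S.e (x 0)⁻¹ * wt (Fin.tail x)) *
          (∏ i : Fin (n + 1), psel wt wtinv ((i : ℕ) + 1) (dface i x)) *
          psel wt wtinv (n + 2) (Fin.init x) = S.e (x 0)) ∧
      (∀ x, w x = S.pe x * wt x) :=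
  stmt11_general S n w
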